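/- Let 0 < p < 1, let L_i ≥ 2 be an integer, let J be a finite nonempty set with integers L_j ≥ 2 for j ∈ J, let α ≥ 0 and λ, θ ∈ ℝ, and let h : ℕ → ℝ be nondecreasing and bounded. Define the Bellman operator (T h)(v) := (1−p)·h(v+1) + min( Q_i(v), min_{j ∈ J} Q_j(v) ), where Q_i(v) := α(v·L_i + L_i(L_i−1)/(2p)) + (λ−θ)·L_i + p·∑_{l} p_l^{(L_i)} h(l) and Q_j(v) := α(v·L_j + L_j(L_j−1)/(2p)) − θ·L_j + p·∑_{l} p_l^{(L_j)} h(v+l). Then T h is nondecreasing on ℕ. -/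

import Mathlib

/-!
Only two ingredients depend on the age `v`: the linear holding cost `α v L`, which is monotone
because `α ≥ 0`, and, for a competing source, the expected bias `∑ₗ p_l h(v + l)`, which is
monotone because the weights are nonnegative and `h` is. The series converge because the shifted
pmf, moved back by `L`, is a multiple of the series `∑ₙ C(n + k, k) (1 - p)ⁿ`, and `h` is bounded.
Monotonicity then survives `min`, `Finset.inf'` and the sums.
-/

/-- Shifted negative-binomial pmf. -/
noncomputable def pnb (p : ℝ) (L l : ℕ) : ℝ :=
  if L ≤ l then ((l - 2).choose (L - 2) : ℝ) * p ^ (L - 1) * (1 - p) ^ (l - L) else 0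

lemma pnb_nonneg {p : ℝ} (hp0 : 0 ≤ p) (hp1 : p ≤ 1) (L l : ℕ) : 0 ≤ pnb p L l := by
  unfold pnb
  split_ifs
  · have : 0 ≤ 1 - p := sub_nonneg.mpr hp1
    positivity
  · exact le_rfl

lemma pnb_add_self (p : ℝ) (L l : ℕ) :
    pnb p L (l + L) = ((l + (L - 2)).choose (L - 2) : ℝ) * (1 - p) ^ l * p ^ (L - 1) := by
  have hchoose : (l + L - 2).choose (L - 2) = (l + (L - 2)).choose (L - 2) := by
    rcases le_or_gt 2 L with hL | hL
    · rw [Nat.add_sub_assoc hL]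
    · simp [Nat.sub_eq_zero_of_le hL.le]
  rw [pnb, if_pos (Nat.le_add_left L l), Nat.add_sub_cancel, hchoose]
  ring

lemma summable_pnb {p : ℝ} (hp0 : 0 < p) (hp1 : p < 1) (L : ℕ) : Summable (pnb p L) := by
  refine (summable_nat_add_iff L).mp ?_
  have hr : ‖1 - p‖ < 1 := by
    rw [Real.norm_of_nonneg (by linarith)]
    linarith
  simpa only [pnb_add_self] using
    (summable_choose_mul_geometric_of_norm_lt_one (L - 2) hr).mul_right (p ^ (L - 1))

lemma Summable.mul_of_nonneg_of_abs_le {ι : Type*} {w f : ι → ℝ} (hw : Summable w)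
    (hw0 : ∀ i, 0 ≤ w i) {M : ℝ} (hM : ∀ i, |f i| ≤ M) : Summable fun i => w i * f i :=
  (hw.mul_right M).of_norm_bounded fun i => by
    rw [Real.norm_eq_abs, abs_mul, abs_of_nonneg (hw0 i)]
    exact mul_le_mul_of_nonneg_left (hM i) (hw0 i)

theorem bellman_operator_monotone_general (p : ℝ) (hp0 : 0 < p) (hp1 : p < 1)
    (Li : ℕ)
    {ι : Type*} [Fintype ι] [Nonempty ι] (Lc : ι → ℕ)
    (α lam θ : ℝ) (hα : 0 ≤ α)
    (h : ℕ → ℝ) (hmono : Monotone h) (hbdd : ∃ M : ℝ, ∀ n, |h n| ≤ M) :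
    Monotone (fun v : ℕ =>
      (1 - p) * h (v + 1) +
        min
          (α * ((v : ℝ) * (Li : ℝ) + (Li : ℝ) * ((Li : ℝ) - 1) / (2 * p))
            + (lam - θ) * (Li : ℝ) + p * ∑' l : ℕ, pnb p Li l * h l)
          (Finset.univ.inf' Finset.univ_nonempty (fun j : ι =>
            α * ((v : ℝ) * (Lc j : ℝ) + (Lc j : ℝ) * ((Lc j : ℝ) - 1) / (2 * p))
              - θ * (Lc j : ℝ) + p * ∑' l : ℕ, pnb p (Lc j) l * h (v + l)))) := by
  obtain ⟨M, hM⟩ := hbdd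
  have hsummable (v : ℕ) (j : ι) : Summable fun l => pnb p (Lc j) l * h (v + l) :=
    (summable_pnb hp0 hp1 _).mul_of_nonneg_of_abs_le (pnb_nonneg hp0.le hp1.le _)
      fun l => hM (v + l)
  intro v w hvw
  dsimp only
  gcongr with j _ l
  · exact hmono (Nat.add_le_add_right hvw 1)
  · exact hsummable v j
  · exact hsummable w j
  · exact pnb_nonneg hp0.le hp1.le _ l
  · exact hmono (Nat.add_le_add_right hvw l)

/-- The Bellman operator of the single-source average-cost SMDP preserves
monotonicity: if the bias `h` is nondecreasing and bounded, then `T h` is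
nondecreasing. -/
theorem bellman_operator_monotone (p : ℝ) (hp0 : 0 < p) (hp1 : p < 1)
    (Li : ℕ) (hLi : 2 ≤ Li)
    {ι : Type*} [Fintype ι] [Nonempty ι] (Lc : ι → ℕ) (hLc : ∀ j, 2 ≤ Lc j)
    (α lam θ : ℝ) (hα : 0 ≤ α)
    (h : ℕ → ℝ) (hmono : Monotone h) (hbdd : ∃ M : ℝ, ∀ n, |h n| ≤ M) :
    Monotone (fun v : ℕ =>
      (1 - p) * h (v + 1) +
        min
          (α * ((v : ℝ) * (Li : ℝ) + (Li : ℝ) * ((Li : ℝ) - 1) / (2 * p))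
            + (lam - θ) * (Li : ℝ) + p * ∑' l : ℕ, pnb p Li l * h l)
          (Finset.univ.inf' Finset.univ_nonempty (fun j : ι =>
            α * ((v : ℝ) * (Lc j : ℝ) + (Lc j : ℝ) * ((Lc j : ℝ) - 1) / (2 * p))
              - θ * (Lc j : ℝ) + p * ∑' l : ℕ, pnb p (Lc j) l * h (v + l)))) :=
  bellman_operator_monotone_general p hp0 hp1 Li Lc α lam θ hα h hmono hbdd
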